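/- arXiv:1912.12492 — 4 statements merged into one kernel-verified Lean document; each statement's English description precedes it below -/
import Mathlib

section
/- Let n, k be natural numbers with 0 < k ≤ n. Define the partial order on k-element subsets of {0,…,n−1} by {i_0<…<i_{k−1}} ≤ {j_0<…<j_{k−1}} iff i_t ≤ j_t for all t. For a k-subset I of {0,…,n−1}, if I = {i_0 < … < i_{k−1}}, and for 0 < l ≤ min{k,i} with i+k < n+l define I_i^l := {i−l,…,i−1} ∪ {n−1−k+l,…,n−1}. Then I ≤ I_i^l if and only if i_{l−1} ≤ i−1. -/
/-- The sorted list of elements of a finset of naturals, in increasing order. -/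
def sortedList (I : Finset ℕ) : List ℕ := I.sort (· ≤ ·)

/-- The componentwise partial order on finsets of naturals: `I ≤ J` iff the `t`-th smallest
element of `I` is at most the `t`-th smallest element of `J` for every `t` (in particular the
cardinalities agree). -/
def fle (I J : Finset ℕ) : Prop := List.Forall₂ (· ≤ ·) (sortedList I) (sortedList J)

/-- The special `k`-subsets `I_i^l` of `{0, …, n-1}`:
`I_i^l = {i-l, …, i-1} ∪ {n-k+l, …, n-1}` when `i + k < n + l`, and
`I_i^l = {n-k, …, n-1}` otherwise. -/
def Iil (n k i l : ℕ) : Finset ℕ :=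
  if i + k < n + l then Finset.Ico (i - l) i ∪ Finset.Ico (n - k + l) n
  else Finset.Ico (n - k) n

/-!
The sorted list of `I_i^l` is a run of consecutive integers ending at `i - 1`, followed by a run
ending at `n - 1`. The entries of the sorted list of `I` grow by at least one per step, so it lies
below a run of consecutive integers as soon as its entry at the end of the run does. For the
second run this is automatic since `I ⊆ {0, …, n - 1}`; for the first it is the condition
`i_{l-1} ≤ i - 1`.
-/

namespace List

theorem SortedLT.getElem_add_sub_le {L : List ℕ} (hL : L.SortedLT) {a b : ℕ} (hab : a ≤ b)
    (hb : b < L.length) : L[a] + (b - a) ≤ L[b] := by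
  induction b, hab using Nat.le_induction with
  | base => simp
  | succ b hab ih =>
    have hstep : L[b] < L[b + 1] := hL.getElem_lt_getElem_iff.2 (Nat.lt_succ_self b)
    have := ih (by omega)
    omega

theorem getElem_range'_append_range' {a m c p t : ℕ}
    (ht : t < (range' a m ++ range' c p).length) :
    (range' a m ++ range' c p)[t] = if t < m then a + t else c + (t - m) := by
  simp only [getElem_append, length_range', getElem_range']
  split_ifs <;> simp

theorem sortedLT_range'_append_range' {a m c p : ℕ} (h : a + m ≤ c) :
    (range' a m ++ range' c p).SortedLT := by
  refine sortedLT_iff_pairwise.2 (pairwise_append.2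
    ⟨pairwise_lt_range', pairwise_lt_range', fun x hx y hy => ?_⟩)
  rw [mem_range'_1] at hx hy
  omega

theorem forall₂_le_range'_append_range'_iff {S : List ℕ} {a m c p : ℕ} (hS : S.SortedLT)
    (hlen : S.length = m + p) (hm : 0 < m) (hbound : ∀ x ∈ S, x < c + p) :
    Forall₂ (· ≤ ·) S (range' a m ++ range' c p) ↔ S.getD (m - 1) 0 ≤ a + (m - 1) := by
  rw [forall₂_iff_get, getD_eq_getElem _ _ (by omega)]
  simp only [get_eq_getElem, length_append, length_range', getElem_range'_append_range']
  constructor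
  · rintro ⟨-, h⟩
    simpa [hm] using h (m - 1) (by omega) (by omega)
  · intro hle
    refine ⟨hlen, fun t h₁ h₂ => ?_⟩
    split_ifs with ht
    · have := hS.getElem_add_sub_le (show t ≤ m - 1 by omega) (by omega)
      omega
    · have := hS.getElem_add_sub_le (show t ≤ m + p - 1 by omega) (by omega)
      have := hbound _ (getElem_mem (show m + p - 1 < S.length by omega))
      omega

end List

theorem sortedLT_sortedList (I : Finset ℕ) : (sortedList I).SortedLT :=
  Finset.sortedLT_sort I

open List in
theorem sortedList_Iil {n k i l : ℕ} (hli : l ≤ i) (hlk : l ≤ k) (hcond : i + k < n + l) :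
    sortedList (Iil n k i l) = range' (i - l) l ++ range' (n - k + l) (k - l) := by
  refine (sortedLT_sortedList _).eq_of_mem_iff (sortedLT_range'_append_range' (by omega))
    fun x => ?_
  simp only [sortedList, Finset.mem_sort, Iil, if_pos hcond, Finset.mem_union, Finset.mem_Ico,
    mem_append, mem_range'_1]
  omega

theorem stmt0_general (n k : ℕ)
    (I : Finset ℕ) (hIsub : I ⊆ Finset.range n) (hIcard : I.card = k)
    (i l : ℕ) (hl : 0 < l) (hlk : l ≤ k) (hli : l ≤ i)
    (hcond : i + k < n + l) :
    fle I (Iil n k i l) ↔ (sortedList I).getD (l - 1) 0 ≤ i - 1 := by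
  have hlen : (sortedList I).length = l + (k - l) := by
    rw [sortedList, Finset.length_sort, hIcard]
    omega
  have hbound : ∀ x ∈ sortedList I, x < n - k + l + (k - l) := fun x hx => by
    have := Finset.mem_range.1 (hIsub ((Finset.mem_sort _).1 hx))
    omega
  rw [fle, sortedList_Iil hli hlk hcond,
    List.forall₂_le_range'_append_range'_iff (sortedLT_sortedList I) hlen hl hbound]
  omega

/-- For a `k`-subset `I = {i₀ < … < i_{k-1}}` of `{0,…,n-1}`, an index `i < n` and
`0 < l ≤ min{k, i}` with `i + k < n + l`, we have `I ≤ I_i^l` (componentwise order)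
if and only if `i_{l-1} ≤ i - 1`. -/
theorem stmt0 (n k : ℕ) (hk : 0 < k) (hkn : k ≤ n)
    (I : Finset ℕ) (hIsub : I ⊆ Finset.range n) (hIcard : I.card = k)
    (i l : ℕ) (hi : i < n) (hl : 0 < l) (hlk : l ≤ k) (hli : l ≤ i)
    (hcond : i + k < n + l) :
    fle I (Iil n k i l) ↔ (sortedList I).getD (l - 1) 0 ≤ i - 1 :=
  stmt0_general n k I hIsub hIcard i l hl hlk hli hcond
end

section
/- Let I, J be k-element subsets of {0,…,n−1} and let I_i^l be as defined (for 0 < l ≤ min{k,i}, i+k < n+l). Then min{I,J} ≤ I_i^l if and only if I ≤ I_i^l or J ≤ I_i^l. -/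
/-- The componentwise minimum of two finsets of naturals. -/
def fmin (I J : Finset ℕ) : Finset ℕ :=
  (List.zipWith min (sortedList I) (sortedList J)).toFinset

/-!
If `i + k ≥ n + l`, then `I_i^l = {n-k, …, n-1}` is the largest `k`-subset and both sides hold.
Otherwise the last `k - l` entries of `I_i^l` are `n-k+l, …, n-1`, which bound the corresponding
entries of every `k`-subset of `{0, …, n-1}`; so such a subset `X` lies below `I_i^l` exactly
when its `l`-th smallest element is `< i`. The `l`-th smallest element of `min{I,J}` is the
minimum of those of `I` and `J`, and it is `< i` iff one of them is.
-/

lemma sortedList_pairwise (I : Finset ℕ) : (sortedList I).Pairwise (· < ·) :=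
  (Finset.sortedLT_sort I).pairwise

lemma length_sortedList (I : Finset ℕ) : (sortedList I).length = I.card :=
  Finset.length_sort _

lemma sortedList_toFinset {L : List ℕ} (h : L.Pairwise (· < ·)) :
    sortedList L.toFinset = L :=
  (List.toFinset_sort (· ≤ ·) (h.imp ne_of_lt)).2 (h.imp le_of_lt)

lemma sortedList_Ico (a b : ℕ) : sortedList (Finset.Ico a b) = List.range' a (b - a) := by
  rw [← sortedList_toFinset List.pairwise_lt_range']
  congr 1
  ext x
  simp only [List.mem_toFinset, List.mem_range'_1, Finset.mem_Ico]
  omega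

lemma List.Pairwise.getElem_add_sub_le {a : List ℕ} (h : a.Pairwise (· < ·)) {s t : ℕ}
    (hst : s ≤ t) (ht : t < a.length) :
    a[s] + (t - s) ≤ a[t] := by
  induction t, hst using Nat.le_induction with
  | base => simp
  | succ t hst ih =>
    have hlt : a[t] < a[t + 1] := List.pairwise_iff_getElem.mp h t (t + 1) _ ht t.lt_succ_self
    have := ih (Nat.lt_of_succ_lt ht)
    omega

lemma getElem_sortedList_add_card_le {I : Finset ℕ} {n : ℕ} (hI : I ⊆ Finset.range n)
    {t : ℕ} (ht : t < (sortedList I).length) :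
    (sortedList I)[t] + I.card ≤ n + t := by
  have hlen := length_sortedList I
  have hlast : I.card - 1 < (sortedList I).length := by omega
  have hgap := (sortedList_pairwise I).getElem_add_sub_le (s := t) (by omega) hlast
  have hmem : (sortedList I)[I.card - 1] ∈ I := (Finset.mem_sort _).mp (List.getElem_mem _)
  have := Finset.mem_range.mp (hI hmem)
  omega

lemma fle_iff_getElem {I J : Finset ℕ} :
    fle I J ↔ (sortedList I).length = (sortedList J).length ∧
      ∀ t (h₁ : t < (sortedList I).length) (h₂ : t < (sortedList J).length),
        (sortedList I)[t] ≤ (sortedList J)[t] := by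
  simp [fle, List.forall₂_iff_get]

lemma List.Pairwise.zipWith_min {a b : List ℕ} (ha : a.Pairwise (· < ·))
    (hb : b.Pairwise (· < ·)) : (List.zipWith min a b).Pairwise (· < ·) := by
  rw [List.pairwise_iff_getElem]
  intro s t hs ht hst
  simp only [List.length_zipWith, lt_min_iff] at hs ht
  simp only [List.getElem_zipWith, lt_min_iff, min_lt_iff]
  have ha' := List.pairwise_iff_getElem.mp ha s t hs.1 ht.1 hst
  have hb' := List.pairwise_iff_getElem.mp hb s t hs.2 ht.2 hst
  omega

lemma sortedList_fmin (I J : Finset ℕ) :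
    sortedList (fmin I J) = List.zipWith min (sortedList I) (sortedList J) :=
  sortedList_toFinset ((sortedList_pairwise I).zipWith_min (sortedList_pairwise J))

lemma card_fmin (I J : Finset ℕ) : (fmin I J).card = min I.card J.card := by
  rw [← length_sortedList, sortedList_fmin, List.length_zipWith, length_sortedList,
    length_sortedList]

lemma fmin_subset_range {I J : Finset ℕ} {n : ℕ} (hI : I ⊆ Finset.range n) :
    fmin I J ⊆ Finset.range n := by
  intro x hx
  obtain ⟨t, ht, rfl⟩ := List.mem_iff_getElem.mp (List.mem_toFinset.mp hx)
  simp only [List.length_zipWith, lt_min_iff] at ht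
  have hmem : (sortedList I)[t] ∈ I := (Finset.mem_sort _).mp (List.getElem_mem _)
  rw [List.getElem_zipWith, Finset.mem_range]
  exact (min_le_left _ _).trans_lt (Finset.mem_range.mp (hI hmem))

section Iil

variable {n k i l : ℕ}

lemma sortedList_Iil_of_lt (hlk : l ≤ k) (hli : l ≤ i) (hc : i + k < n + l) :
    sortedList (Iil n k i l) = List.range' (i - l) l ++ List.range' (n - k + l) (k - l) := by
  have hsorted : (List.range' (i - l) l ++ List.range' (n - k + l) (k - l)).Pairwise (· < ·) := by
    refine List.pairwise_append.mpr ⟨List.pairwise_lt_range', List.pairwise_lt_range', ?_⟩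
    intro x hx y hy
    rw [List.mem_range'_1] at hx hy
    omega
  rw [Iil, if_pos hc, ← sortedList_toFinset hsorted]
  congr 1
  ext x
  simp only [List.toFinset_append, Finset.mem_union, List.mem_toFinset, List.mem_range'_1,
    Finset.mem_Ico]
  omega

lemma fle_Iil_iff_of_lt {X : Finset ℕ} (hX : X ⊆ Finset.range n) (hXc : X.card = k)
    (hl : 0 < l) (hlk : l ≤ k) (hli : l ≤ i) (hc : i + k < n + l) :
    fle X (Iil n k i l) ↔
      (sortedList X)[l - 1]'(by rw [length_sortedList]; omega) < i := by
  have hlen := length_sortedList X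
  have hhead : l - 1 < (List.range' (i - l) l).length := by
    rw [List.length_range']; omega
  rw [fle_iff_getElem, sortedList_Iil_of_lt hlk hli hc]
  simp only [List.length_append, List.length_range']
  constructor
  · rintro ⟨-, h⟩
    have := h (l - 1) (by omega) (by omega)
    rw [List.getElem_append_left hhead, List.getElem_range'] at this
    omega
  · refine fun hx => ⟨by omega, fun t ht₁ ht₂ => ?_⟩
    by_cases htl : t < l
    · rw [List.getElem_append_left (by rw [List.length_range']; omega), List.getElem_range']
      have := (sortedList_pairwise X).getElem_add_sub_le (s := t) (t := l - 1) (by omega)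
        (by omega)
      omega
    · rw [List.getElem_append_right (by rw [List.length_range']; omega), List.getElem_range']
      have := getElem_sortedList_add_card_le hX ht₁
      simp only [List.length_range']
      omega

lemma fle_Iil_of_le {X : Finset ℕ} (hX : X ⊆ Finset.range n) (hXc : X.card = k)
    (hc : ¬ i + k < n + l) : fle X (Iil n k i l) := by
  have hkn : k ≤ n := hXc ▸ Finset.card_range n ▸ Finset.card_le_card hX
  rw [fle_iff_getElem, Iil, if_neg hc, sortedList_Ico]
  refine ⟨by simp only [List.length_range', length_sortedList]; omega, fun t ht₁ ht₂ => ?_⟩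
  rw [List.getElem_range']
  have := getElem_sortedList_add_card_le hX ht₁
  omega

end Iil

theorem stmt2_general (n k : ℕ)
    (I J : Finset ℕ) (hI : I ⊆ Finset.range n) (hJ : J ⊆ Finset.range n)
    (hIc : I.card = k) (hJc : J.card = k)
    (i l : ℕ) (hl : 0 < l) (hlk : l ≤ k) (hli : l ≤ i) :
    fle (fmin I J) (Iil n k i l) ↔ fle I (Iil n k i l) ∨ fle J (Iil n k i l) := by
  have hmin : (fmin I J).card = k := by rw [card_fmin, hIc, hJc, min_self]
  by_cases hc : i + k < n + l
  · rw [fle_Iil_iff_of_lt (fmin_subset_range hI) hmin hl hlk hli hc,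
      fle_Iil_iff_of_lt hI hIc hl hlk hli hc, fle_Iil_iff_of_lt hJ hJc hl hlk hli hc]
    simp only [sortedList_fmin, List.getElem_zipWith, min_lt_iff]
  · exact iff_of_true (fle_Iil_of_le (fmin_subset_range hI) hmin hc)
      (Or.inl (fle_Iil_of_le hI hIc hc))

/-- For `k`-subsets `I, J` of `{0,…,n-1}` and the special subsets `I_i^l`
(for `0 < l ≤ min{k,i}`): `min{I,J} ≤ I_i^l` if and only if `I ≤ I_i^l` or `J ≤ I_i^l`. -/
theorem stmt2 (n k : ℕ) (hk : 0 < k) (hkn : k ≤ n)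
    (I J : Finset ℕ) (hI : I ⊆ Finset.range n) (hJ : J ⊆ Finset.range n)
    (hIc : I.card = k) (hJc : J.card = k)
    (i l : ℕ) (hi : i < n) (hl : 0 < l) (hlk : l ≤ k) (hli : l ≤ i) :
    fle (fmin I J) (Iil n k i l) ↔ fle I (Iil n k i l) ∨ fle J (Iil n k i l) :=
  stmt2_general n k I J hI hJ hIc hJc i l hl hlk hli
end

section
/- For a k-subset I of {0,…,n−1}, an index i ∈ {0,…,n−1} and 0 ≤ l ≤ min{k,i}, the condition #(I ∩ {0,…,i−1}) ≥ l holds if and only if I ≤ I_i^l, where I_i^l := {i−l,…,i−1} ∪ {n−1−k+l,…,n−1} if i+k < n+l, and I_i^l := {n−1−k,…,n−1} otherwise. -/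
open Finset

/-- The `j`-th smallest element of `I` is `< m` iff `j` is smaller than the number of
elements of `I` below `m`. -/
lemma count_iff (I : Finset ℕ) {k : ℕ} (h : I.card = k) (m : ℕ) (j : Fin k) :
    I.orderEmbOfFin h j < m ↔ (j : ℕ) < (I ∩ Finset.range m).card := by
  set f := I.orderEmbOfFin h with hf
  constructor
  · intro hlt
    have hsub : (Finset.Iic j).image f ⊆ I ∩ Finset.range m := by
      intro x hx
      simp only [Finset.mem_image, Finset.mem_Iic] at hx
      obtain ⟨j', hj', rfl⟩ := hx
      exact Finset.mem_inter.2 ⟨I.orderEmbOfFin_mem h j',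
        Finset.mem_range.2 (lt_of_le_of_lt (f.monotone hj') hlt)⟩
    have := Finset.card_le_card hsub
    rwa [Finset.card_image_of_injective _ f.injective, Fin.card_Iic, Nat.succ_le_iff] at this
  · intro hlt
    by_contra hge
    push_neg at hge
    have hsub : I ∩ Finset.range m ⊆ (Finset.Iio j).image f := by
      intro x hx
      obtain ⟨hxI, hxm⟩ := Finset.mem_inter.1 hx
      obtain ⟨j', rfl⟩ : ∃ j', f j' = x := by
        have := I.range_orderEmbOfFin h
        have : x ∈ Set.range f := by rw [this]; exact hxI
        exact this
      refine Finset.mem_image.2 ⟨j', Finset.mem_Iio.2 ?_, rfl⟩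
      have : f j' < f j := lt_of_lt_of_le (Finset.mem_range.1 hxm) hge
      exact f.strictMono.lt_iff_lt.1 this
    have := Finset.card_le_card hsub
    rw [Finset.card_image_of_injective _ f.injective, Fin.card_Iio] at this
    omega

/-- Componentwise order of finsets of equal cardinality, characterized by counting. -/
lemma fle_iff {I J : Finset ℕ} {k : ℕ} (hI : I.card = k) (hJ : J.card = k) :
    fle I J ↔ ∀ m, (J ∩ Finset.range m).card ≤ (I ∩ Finset.range m).card := by
  have hlenI : (sortedList I).length = k := by rw [sortedList, Finset.length_sort, hI]
  have hlenJ : (sortedList J).length = k := by rw [sortedList, Finset.length_sort, hJ]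
  have hget : fle I J ↔ ∀ j : Fin k, I.orderEmbOfFin hI j ≤ J.orderEmbOfFin hJ j := by
    rw [fle, List.forall₂_iff_get]
    constructor
    · rintro ⟨-, hg⟩ j
      rw [Finset.orderEmbOfFin_apply, Finset.orderEmbOfFin_apply]
      exact hg j (by omega) (by omega)
    · intro hg
      refine ⟨by omega, fun t h1 h2 => ?_⟩
      have := hg ⟨t, by omega⟩
      rwa [Finset.orderEmbOfFin_apply, Finset.orderEmbOfFin_apply] at this
  rw [hget]
  constructor
  · intro hg m
    by_contra hcon
    push_neg at hcon
    have hcI : (I ∩ Finset.range m).card < k := by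
      calc (I ∩ Finset.range m).card < (J ∩ Finset.range m).card := hcon
        _ ≤ J.card := Finset.card_le_card Finset.inter_subset_left
        _ = k := hJ
    set j : Fin k := ⟨(I ∩ Finset.range m).card, hcI⟩
    have h1 : J.orderEmbOfFin hJ j < m := (count_iff J hJ m j).2 hcon
    have h2 : ¬ I.orderEmbOfFin hI j < m := by
      rw [count_iff I hI m j]; exact Nat.lt_irrefl _
    exact h2 (lt_of_le_of_lt (hg j) h1)
  · intro hc j
    have h1 : J.orderEmbOfFin hJ j < J.orderEmbOfFin hJ j + 1 := Nat.lt_succ_self _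
    have h2 := (count_iff J hJ _ j).1 h1
    have h3 : (j : ℕ) < (I ∩ Finset.range (J.orderEmbOfFin hJ j + 1)).card :=
      lt_of_lt_of_le h2 (hc _)
    have := (count_iff I hI _ j).2 h3
    omega

lemma count_mono (I : Finset ℕ) {a b : ℕ} (h : a ≤ b) :
    (I ∩ Finset.range a).card ≤ (I ∩ Finset.range b).card :=
  Finset.card_le_card (Finset.inter_subset_inter (subset_refl I)
    (Finset.range_subset_range.2 h))

lemma count_le_add (I : Finset ℕ) (a b : ℕ) :
    (I ∩ Finset.range b).card ≤ (I ∩ Finset.range a).card + (b - a) := by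
  have hsub : I ∩ Finset.range b ⊆ (I ∩ Finset.range a) ∪ Finset.Ico a b := by
    intro x hx
    obtain ⟨h1, h2⟩ := Finset.mem_inter.1 hx
    rw [Finset.mem_range] at h2
    rcases lt_or_ge x a with h | h
    · exact Finset.mem_union_left _ (Finset.mem_inter.2 ⟨h1, Finset.mem_range.2 h⟩)
    · exact Finset.mem_union_right _ (Finset.mem_Ico.2 ⟨h, h2⟩)
  calc (I ∩ Finset.range b).card ≤ _ := Finset.card_le_card hsub
    _ ≤ (I ∩ Finset.range a).card + (Finset.Ico a b).card := Finset.card_union_le _ _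
    _ = (I ∩ Finset.range a).card + (b - a) := by rw [Nat.card_Ico]

lemma count_total {I : Finset ℕ} {n : ℕ} (hIsub : I ⊆ Finset.range n) (m : ℕ) :
    I.card ≤ (I ∩ Finset.range m).card + (n - m) := by
  have h := count_le_add I m n
  rwa [Finset.inter_eq_left.2 hIsub] at h

lemma Ico_inter_range (a b m : ℕ) :
    Finset.Ico a b ∩ Finset.range m = Finset.Ico a (min b m) := by
  rw [Finset.range_eq_Ico, Finset.Ico_inter_Ico]
  simp

lemma card_Iil (n k i l : ℕ) (hkn : k ≤ n) (hlk : l ≤ k) (hli : l ≤ i) (hi : i < n) :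
    (Iil n k i l).card = k := by
  rw [Iil]
  split_ifs with hA
  · have hdisj : Disjoint (Finset.Ico (i - l) i) (Finset.Ico (n - k + l) n) := by
      rw [Finset.disjoint_left]
      intro x hx hx'
      rw [Finset.mem_Ico] at hx hx'
      omega
    rw [Finset.card_union_of_disjoint hdisj, Nat.card_Ico, Nat.card_Ico]
    omega
  · rw [Nat.card_Ico]; omega

/-- For a `k`-subset `I` of `{0,…,n-1}`, an index `i < n` and `0 ≤ l ≤ min{k,i}`:
`#(I ∩ {0,…,i-1}) ≥ l` holds if and only if `I ≤ I_i^l` in the componentwise order. -/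
theorem stmt5 (n k : ℕ) (hk : 0 < k) (hkn : k ≤ n)
    (I : Finset ℕ) (hIsub : I ⊆ Finset.range n) (hIcard : I.card = k)
    (i l : ℕ) (hi : i < n) (hlk : l ≤ k) (hli : l ≤ i) :
    l ≤ (I ∩ Finset.range i).card ↔ fle I (Iil n k i l) := by
  rw [fle_iff hIcard (card_Iil n k i l hkn hlk hli hi)]
  by_cases hA : i + k < n + l
  · have hcount : ∀ m, (Iil n k i l ∩ Finset.range m).card
        = (min i m - (i - l)) + (min n m - (n - k + l)) := by
      intro m
      rw [Iil, if_pos hA, Finset.union_inter_distrib_right, Ico_inter_range,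
        Ico_inter_range, Finset.card_union_of_disjoint, Nat.card_Ico, Nat.card_Ico]
      rw [Finset.disjoint_left]
      intro x hx hx'
      rw [Finset.mem_Ico] at hx hx'
      omega
    constructor
    · intro hl m
      rw [hcount m]
      have F1 := count_le_add I m i
      have F2 := count_total hIsub m
      rcases le_or_gt i m with h | h
      · have F3 := count_mono I h
        omega
      · omega
    · intro hfle
      have h := hfle i
      rw [hcount i] at h
      omega
  · have hl : l ≤ (I ∩ Finset.range i).card := by
      have F2 := count_total hIsub i
      omega
    simp only [hl, true_iff]
    intro m
    rw [Iil, if_neg hA, Ico_inter_range, Nat.card_Ico]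
    have F2 := count_total hIsub m
    omega
end

section
/- Let O be a DVR with uniformizer π. Metrical convexity implies convexity: if Γ is a finite set of homothety classes of lattices in K^n such that for all [Λ], [Λ'] ∈ Γ every class [Λ''] with dist([Λ],[Λ'']) + dist([Λ''],[Λ']) = dist([Λ],[Λ']) lies in Γ (distances taken in the graph metric of the Bruhat–Tits building, i.e. the minimum length of a chain of neighbouring classes), then Γ is convex: for any representatives Λ, Λ' of classes in Γ, the class [Λ ∩ Λ'] belongs to Γ. (Key step: for appropriate integers n, n', the class [π^n Λ ∩ π^{n'} Λ'] lies on a geodesic between [Λ] and [Λ'].) -/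
section

variable (O K : Type*) [CommRing O] [Field K] [Algebra O K] (n : ℕ)

/-- Scaling an `O`-lattice in `K^n` by a scalar `c ∈ K`. -/
noncomputable def smulLat (c : K) (Λ : Submodule O (Fin n → K)) :
    Submodule O (Fin n → K) :=
  Submodule.map (c • (LinearMap.id : (Fin n → K) →ₗ[O] (Fin n → K))) Λ

/-- A (full) `O`-lattice in `K^n`: a finitely generated `O`-submodule spanning `K^n`. -/
def IsLatticeFull (Λ : Submodule O (Fin n → K)) : Prop :=
  Λ.FG ∧ Submodule.span K (Λ : Set (Fin n → K)) = ⊤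

/-- Two submodules of `K^n` are homothetic if one is `π^m` times the other, `m ∈ ℤ`. -/
noncomputable def Homothetic (π : O) (Λ Λ' : Submodule O (Fin n → K)) : Prop :=
  ∃ m : ℤ, Λ' = smulLat O K n ((algebraMap O K π) ^ m) Λ

/-- Two non-homothetic lattices are neighbours if they admit homothetic representatives
`M, M'` with `πM ⊆ M' ⊆ M`. -/
noncomputable def IsNeighbour (π : O) (Λ Λ' : Submodule O (Fin n → K)) : Prop :=
  ¬ Homothetic O K n π Λ Λ' ∧
  ∃ M M' : Submodule O (Fin n → K), Homothetic O K n π M Λ ∧ Homothetic O K n π M' Λ' ∧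
    smulLat O K n (algebraMap O K π) M ≤ M' ∧ M' ≤ M

/-- There is a chain of length `d` of neighbouring lattice classes from `[Λ]` to `[Λ']`
(the graph structure of the Bruhat–Tits building). -/
noncomputable def ChainTo (π : O) (Λ Λ' : Submodule O (Fin n → K)) (d : ℕ) : Prop :=
  ∃ c : ℕ → Submodule O (Fin n → K), c 0 = Λ ∧ c d = Λ' ∧
    ∀ t, t < d → IsNeighbour O K n π (c t) (c (t + 1))

/-- `d` is the graph distance between the classes `[Λ]` and `[Λ']`: there is a chain of
neighbouring classes of length `d` and none of smaller length. -/
noncomputable def IsDist (π : O) (Λ Λ' : Submodule O (Fin n → K)) (d : ℕ) : Prop :=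
  ChainTo O K n π Λ Λ' d ∧ ∀ d', d' < d → ¬ ChainTo O K n π Λ Λ' d'

end

set_option linter.unusedSectionVars false
set_option linter.unnecessarySeqFocus false

namespace Stmt13Aux

variable {O K : Type*} [CommRing O] [IsDomain O] [IsDiscreteValuationRing O]
    [Field K] [Algebra O K] [IsFractionRing O K] {n : ℕ}

lemma algMap_inj : Function.Injective (algebraMap O K) :=
  IsFractionRing.injective O K

lemma mem_smulLat {c : K} {Λ : Submodule O (Fin n → K)} {x : Fin n → K} :
    x ∈ smulLat O K n c Λ ↔ ∃ y ∈ Λ, c • y = x := by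
  simp [smulLat, Submodule.mem_map]

lemma smulLat_mono {c : K} {Λ Λ' : Submodule O (Fin n → K)} (h : Λ ≤ Λ') :
    smulLat O K n c Λ ≤ smulLat O K n c Λ' :=
  Submodule.map_mono h

lemma smulLat_smulLat (c c' : K) (Λ : Submodule O (Fin n → K)) :
    smulLat O K n c (smulLat O K n c' Λ) = smulLat O K n (c * c') Λ := by
  ext x
  simp only [mem_smulLat]
  constructor
  · rintro ⟨y, ⟨z, hz, rfl⟩, rfl⟩; exact ⟨z, hz, mul_smul c c' z⟩
  · rintro ⟨z, hz, rfl⟩; exact ⟨c' • z, ⟨z, hz, rfl⟩, (mul_smul c c' z).symm⟩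

lemma smulLat_one (Λ : Submodule O (Fin n → K)) : smulLat O K n 1 Λ = Λ := by
  rw [smulLat]
  convert Submodule.map_id Λ
  ext x i <;> simp

/-! ### zpow scaling -/

noncomputable def zsc (π : O) (s : ℤ) (Λ : Submodule O (Fin n → K)) :
    Submodule O (Fin n → K) :=
  smulLat O K n ((algebraMap O K π) ^ s) Λ

lemma piK_ne_zero {π : O} (hπ : π ≠ 0) : algebraMap O K π ≠ 0 := by
  rw [Ne, map_eq_zero_iff _ algMap_inj]; exact hπ

lemma zsc_zsc {π : O} (hπ : π ≠ 0) (s t : ℤ) (Λ : Submodule O (Fin n → K)) :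
    zsc π s (zsc π t Λ) = zsc π (s + t) Λ := by
  rw [zsc, zsc, zsc, smulLat_smulLat, ← zpow_add₀ (piK_ne_zero hπ)]

lemma zsc_zero (π : O) (Λ : Submodule O (Fin n → K)) : zsc π 0 Λ = Λ := by
  rw [zsc, zpow_zero, smulLat_one]

lemma zsc_mono (π : O) (s : ℤ) {Λ Λ' : Submodule O (Fin n → K)} (h : Λ ≤ Λ') :
    zsc π s Λ ≤ zsc π s Λ' := smulLat_mono h

/-! ### the valuation predicate -/

def vle (π : O) (w : ℤ) (c : K) : Prop :=
  ∃ o : O, c = algebraMap O K o * (algebraMap O K π) ^ w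

lemma vle_zero (π : O) (w : ℤ) : vle π w (0 : K) := ⟨0, by simp⟩

lemma vle_add {π : O} {w : ℤ} {c c' : K} (h : vle π w c) (h' : vle π w c') :
    vle π w (c + c') := by
  obtain ⟨o, rfl⟩ := h; obtain ⟨o', rfl⟩ := h'
  exact ⟨o + o', by rw [map_add, add_mul]⟩

lemma vle_algsmul {π : O} {w : ℤ} {c : K} (o' : O) (h : vle π w c) :
    vle π w (algebraMap O K o' * c) := by
  obtain ⟨o, rfl⟩ := h
  exact ⟨o' * o, by rw [map_mul, mul_assoc]⟩

lemma piK_pow_sub {π : O} (hπ : π ≠ 0) {w w' : ℤ} (h : w' ≤ w) :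
    (algebraMap O K π) ^ w = algebraMap O K (π ^ (w - w').toNat) * (algebraMap O K π) ^ w' := by
  rw [map_pow, ← zpow_natCast, Int.toNat_of_nonneg (by omega), ← zpow_add₀ (piK_ne_zero hπ)]
  congr 1; omega

lemma vle_mono {π : O} (hπ : π ≠ 0) {w w' : ℤ} {c : K} (h : w' ≤ w) (hc : vle π w c) :
    vle π w' c := by
  obtain ⟨o, rfl⟩ := hc
  exact ⟨o * π ^ (w - w').toNat, by rw [piK_pow_sub hπ h, map_mul, mul_assoc]⟩

lemma vle_self (π : O) (w : ℤ) : vle (K := K) π w ((algebraMap O K π) ^ w) := ⟨1, by simp⟩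

lemma vle_le {π : O} (hπ : Irreducible π) {w w' : ℤ}
    (h : vle π w ((algebraMap O K π) ^ w' : K)) : w ≤ w' := by
  by_contra hlt
  push_neg at hlt
  obtain ⟨o, ho⟩ := h
  have hne := piK_ne_zero (K := K) hπ.ne_zero
  have key : algebraMap O K (o * π ^ (w - w').toNat) = algebraMap O K 1 := by
    rw [map_mul, map_one]
    have : (algebraMap O K π) ^ w' * (algebraMap O K π) ^ (-w') = 1 := by
      rw [← zpow_add₀ hne]; simp
    rw [← this, ho, piK_pow_sub hπ.ne_zero hlt.le,
      mul_assoc, mul_assoc, this, mul_one]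
  have key2 : o * π ^ (w - w').toNat = 1 := algMap_inj key
  have hk : (w - w').toNat = ((w - w').toNat - 1) + 1 := by omega
  apply hπ.not_isUnit
  apply IsUnit.of_mul_eq_one (a := π) (π ^ ((w - w').toNat - 1) * o)
  calc π * (π ^ ((w - w').toNat - 1) * o) = o * π ^ (((w - w').toNat - 1) + 1) := by ring
  _ = 1 := by rw [← hk, key2]

/-! ### lattices with given exponents relative to a basis -/

noncomputable def latL (π : O) {ι : Type*} (e : Module.Basis ι K (Fin n → K)) (w : ι → ℤ) :
    Submodule O (Fin n → K) :=
  Submodule.span O (Set.range fun i => (algebraMap O K π) ^ (w i) • e i)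

lemma repr_smul_basis {ι : Type*} [DecidableEq ι] (e : Module.Basis ι K (Fin n → K)) (c : K) (i j : ι) :
    e.repr (c • e i) j = if j = i then c else 0 := by
  rw [map_smul, Module.Basis.repr_self, Finsupp.smul_apply, Finsupp.single_apply]
  rcases eq_or_ne j i with rfl | h
  · simp
  · rw [if_neg (Ne.symm h), if_neg h, smul_zero]

lemma repr_algsmul {ι : Type*} (e : Module.Basis ι K (Fin n → K)) (o : O) (x : Fin n → K) (i : ι) :
    e.repr (o • x) i = algebraMap O K o * e.repr x i := by
  rw [← algebraMap_smul K o x, map_smul, Finsupp.smul_apply, smul_eq_mul]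

lemma mem_latL {π : O} {ι : Type*} [Fintype ι] (e : Module.Basis ι K (Fin n → K)) (w : ι → ℤ)
    (x : Fin n → K) :
    x ∈ latL π e w ↔ ∀ i, vle π (w i) (e.repr x i) := by
  classical
  constructor
  · intro hx
    refine Submodule.span_induction ?_ ?_ ?_ ?_ hx
    · rintro _ ⟨i, rfl⟩ j
      rw [repr_smul_basis]
      split_ifs with h
      · subst h; exact vle_self π (w j)
      · exact vle_zero π (w j)
    · intro i; rw [map_zero]; exact vle_zero π (w i)
    · intro x y _ _ hx hy i
      rw [map_add, Finsupp.add_apply]; exact vle_add (hx i) (hy i)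
    · intro o x _ hx i
      rw [repr_algsmul]; exact vle_algsmul o (hx i)
  · intro h
    choose o ho using h
    have hx : x = ∑ i, o i • ((algebraMap O K π) ^ (w i) • e i) := by
      conv_lhs => rw [← e.sum_repr x]
      refine Finset.sum_congr rfl fun i _ => ?_
      rw [ho i, ← algebraMap_smul K (o i) ((algebraMap O K π) ^ (w i) • e i), smul_smul]
    rw [hx]
    exact Submodule.sum_mem _ fun i _ =>
      Submodule.smul_mem _ _ (Submodule.subset_span ⟨i, rfl⟩)

lemma latL_le_latL {π : O} (hπ : Irreducible π) {ι : Type*} [Fintype ι]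
    (e : Module.Basis ι K (Fin n → K)) (w w' : ι → ℤ) :
    latL π e w ≤ latL π e w' ↔ ∀ i, w' i ≤ w i := by
  classical
  constructor
  · intro h i
    have hg : ((algebraMap O K π) ^ (w i) • e i) ∈ latL π e w' :=
      h (Submodule.subset_span ⟨i, rfl⟩)
    rw [mem_latL] at hg
    have := hg i
    rw [repr_smul_basis, if_pos rfl] at this
    exact vle_le hπ this
  · intro h x hx
    rw [mem_latL] at hx ⊢
    exact fun i => vle_mono hπ.ne_zero (h i) (hx i)

lemma latL_inj {π : O} (hπ : Irreducible π) {ι : Type*} [Fintype ι]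
    (e : Module.Basis ι K (Fin n → K)) {w w' : ι → ℤ} (h : latL π e w = latL π e w') : w = w' := by
  funext i
  have h1 := (latL_le_latL hπ e w w').1 h.le i
  have h2 := (latL_le_latL hπ e w' w).1 h.ge i
  omega

lemma latL_inf {π : O} (hπ : π ≠ 0) {ι : Type*} [Fintype ι] (e : Module.Basis ι K (Fin n → K))
    (w w' : ι → ℤ) :
    latL π e w ⊓ latL π e w' = latL π e (fun i => max (w i) (w' i)) := by
  ext x
  rw [Submodule.mem_inf, mem_latL, mem_latL, mem_latL, ← forall_and]
  refine forall_congr' fun i => ?_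
  constructor
  · rintro ⟨h1, h2⟩
    rcases max_cases (w i) (w' i) with ⟨hm, _⟩ | ⟨hm, _⟩ <;> rw [hm] <;> assumption
  · intro h
    exact ⟨vle_mono hπ (le_max_left _ _) h, vle_mono hπ (le_max_right _ _) h⟩

lemma zsc_latL {π : O} (hπ : π ≠ 0) {ι : Type*} (e : Module.Basis ι K (Fin n → K)) (w : ι → ℤ)
    (m : ℤ) : zsc π m (latL π e w) = latL π e (fun i => w i + m) := by
  rw [zsc, smulLat, latL, Submodule.map_span]
  congr 1
  rw [← Set.range_comp]
  refine congrArg _ (funext fun i => ?_)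
  simp only [Function.comp_apply, LinearMap.smul_apply, LinearMap.id_apply]
  rw [smul_smul, ← zpow_add₀ (piK_ne_zero hπ), add_comm (w i) m]

lemma latL_full (π : O) (hπ : π ≠ 0) {ι : Type*} [Fintype ι] (e : Module.Basis ι K (Fin n → K))
    (w : ι → ℤ) : IsLatticeFull O K n (latL π e w) := by
  constructor
  · exact Submodule.fg_span (Set.finite_range _)
  · rw [eq_top_iff, ← e.span_eq]
    rw [Submodule.span_le]
    rintro _ ⟨i, rfl⟩
    have hmem : (algebraMap O K π) ^ (w i) • e i ∈ Submodule.span K (latL π e w : Set (Fin n → K)) :=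
      Submodule.subset_span (Submodule.subset_span ⟨i, rfl⟩)
    have := Submodule.smul_mem _ ((algebraMap O K π) ^ (-(w i))) hmem
    rwa [smul_smul, ← zpow_add₀ (piK_ne_zero hπ), neg_add_cancel, zpow_zero, one_smul] at this

/-! ### chains -/

lemma homothetic_def {π : O} {M Λ : Submodule O (Fin n → K)} :
    Homothetic O K n π M Λ ↔ ∃ m : ℤ, Λ = zsc π m M := Iff.rfl

lemma zsc_congr {π : O} {s t : ℤ} (X : Submodule O (Fin n → K)) (h : s = t) :
    zsc π s X = zsc π t X := by rw [h]

lemma zsc_one {π : O} (X : Submodule O (Fin n → K)) :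
    smulLat O K n (algebraMap O K π) X = zsc π 1 X := by rw [zsc, zpow_one]

lemma homothetic_refl (π : O) (Λ : Submodule O (Fin n → K)) : Homothetic O K n π Λ Λ :=
  ⟨0, by rw [← zsc, zsc_zero]⟩

lemma homothetic_symm {π : O} (hπ : π ≠ 0) {Λ Λ' : Submodule O (Fin n → K)}
    (h : Homothetic O K n π Λ Λ') : Homothetic O K n π Λ' Λ := by
  obtain ⟨m, rfl⟩ := h
  exact ⟨-m, by rw [← zsc, ← zsc, zsc_zsc hπ, neg_add_cancel, zsc_zero]⟩

lemma neighbour_symm {π : O} (hπ : π ≠ 0) {Λ Λ' : Submodule O (Fin n → K)}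
    (h : IsNeighbour O K n π Λ Λ') : IsNeighbour O K n π Λ' Λ := by
  obtain ⟨hnh, M, M', ⟨p, hp⟩, ⟨q, hq⟩, h3, h4⟩ := h
  rw [← zsc] at hp hq
  rw [zsc_one] at h3
  refine ⟨fun hh => hnh (homothetic_symm hπ hh), M', zsc π 1 M,
    ⟨q, hq⟩, ⟨p - 1, by rw [← zsc, zsc_zsc hπ, hp]; exact zsc_congr _ (by omega)⟩, ?_, h3⟩
  rw [zsc_one]
  exact zsc_mono π 1 h4

lemma chain_symm {π : O} (hπ : π ≠ 0) {A B : Submodule O (Fin n → K)} {d : ℕ}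
    (h : ChainTo O K n π A B d) : ChainTo O K n π B A d := by
  obtain ⟨c, h0, hd, hstep⟩ := h
  refine ⟨fun t => c (d - t), by simpa using hd, by simpa using h0, fun t ht => ?_⟩
  show IsNeighbour O K n π (c (d - t)) (c (d - (t + 1)))
  have e1 : d - t = (d - (t + 1)) + 1 := by omega
  rw [e1]
  exact neighbour_symm hπ (hstep _ (by omega))

lemma chain_trans {π : O} {A B C : Submodule O (Fin n → K)} {d1 d2 : ℕ}
    (h1 : ChainTo O K n π A B d1) (h2 : ChainTo O K n π B C d2) :
    ChainTo O K n π A C (d1 + d2) := by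
  obtain ⟨c1, h10, h1d, hstep1⟩ := h1
  obtain ⟨c2, h20, h2d, hstep2⟩ := h2
  refine ⟨fun t => if t < d1 then c1 t else c2 (t - d1), ?_, ?_, ?_⟩
  · show (if 0 < d1 then c1 0 else c2 (0 - d1)) = A
    rcases Nat.eq_zero_or_pos d1 with hz | hp
    · rw [if_neg (by omega), Nat.zero_sub, h20, ← h1d, hz, h10]
    · rw [if_pos hp, h10]
  · show (if d1 + d2 < d1 then c1 (d1 + d2) else c2 (d1 + d2 - d1)) = C
    rw [if_neg (by omega), show d1 + d2 - d1 = d2 by omega, h2d]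
  · intro t ht
    show IsNeighbour O K n π (if t < d1 then c1 t else c2 (t - d1))
      (if t + 1 < d1 then c1 (t + 1) else c2 (t + 1 - d1))
    rcases lt_trichotomy (t + 1) d1 with h | h | h
    · rw [if_pos (by omega), if_pos h]
      exact hstep1 t (by omega)
    · rw [if_pos (by omega), if_neg (by omega), show t + 1 - d1 = 0 by omega, h20, ← h1d, ← h]
      exact hstep1 t (by omega)
    · rcases Nat.lt_or_ge t d1 with h' | h'
      · omega
      · rw [if_neg (by omega), if_neg (by omega), show t + 1 - d1 = (t - d1) + 1 by omega]
        exact hstep2 (t - d1) (by omega)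

lemma chain_squeeze {π : O} (hπ : π ≠ 0) :
    ∀ (d : ℕ) (A B : Submodule O (Fin n → K)), ChainTo O K n π A B d →
      ∃ u v : ℤ, zsc π (u + d) A ≤ zsc π v B ∧ zsc π v B ≤ zsc π u A := by
  intro d
  induction d with
  | zero =>
    intro A B h
    obtain ⟨c, h0, hd, -⟩ := h
    refine ⟨0, 0, ?_, ?_⟩ <;> rw [← h0, ← hd] <;> exact le_of_eq (zsc_congr _ (by omega))
  | succ d ih =>
    intro A B h
    obtain ⟨c, h0, hd, hstep⟩ := h
    obtain ⟨u, v, H1, H2⟩ := ih A (c d) ⟨c, h0, rfl, fun t ht => hstep t (by omega)⟩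
    obtain ⟨-, M, M', ⟨p, hp⟩, ⟨q, hq⟩, h3, h4⟩ := hstep d (by omega)
    rw [← zsc] at hp
    rw [← zsc, hd] at hq
    rw [zsc_one] at h3
    refine ⟨u, v + p - q, ?_, ?_⟩
    · have step1 : zsc π (u + (d + 1 : ℕ)) A = zsc π 1 (zsc π (u + d) A) := by
        rw [zsc_zsc hπ]; exact zsc_congr _ (by push_cast; omega)
      rw [step1]
      have step2 : zsc π 1 (zsc π v (c d)) = zsc π (v + p) (zsc π 1 M) := by
        rw [hp, zsc_zsc hπ, zsc_zsc hπ, zsc_zsc hπ]; exact zsc_congr _ (by omega)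
      have step3 : zsc π (v + p - q) B = zsc π (v + p) M' := by
        rw [hq, zsc_zsc hπ]; exact zsc_congr _ (by omega)
      calc zsc π 1 (zsc π (u + d) A) ≤ zsc π 1 (zsc π v (c d)) := zsc_mono π 1 H1
        _ = zsc π (v + p) (zsc π 1 M) := step2
        _ ≤ zsc π (v + p) M' := zsc_mono _ _ h3
        _ = zsc π (v + p - q) B := step3.symm
    · have step3 : zsc π (v + p - q) B = zsc π (v + p) M' := by
        rw [hq, zsc_zsc hπ]; exact zsc_congr _ (by omega)
      have step4 : zsc π (v + p) M = zsc π v (c d) := by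
        rw [hp, zsc_zsc hπ]
      calc zsc π (v + p - q) B = zsc π (v + p) M' := step3
        _ ≤ zsc π (v + p) M := zsc_mono _ _ h4
        _ = zsc π v (c d) := step4
        _ ≤ zsc π u A := H2

lemma chain_lb {π : O} (hπ : Irreducible π) {ι : Type*} [Fintype ι]
    (e : Module.Basis ι K (Fin n → K)) (w w' : ι → ℤ) (d : ℕ)
    (h : ChainTo O K n π (latL π e w) (latL π e w') d) :
    ∀ i j, (w' i - w i) - (w' j - w j) ≤ d := by
  obtain ⟨u, v, H1, H2⟩ := chain_squeeze hπ.ne_zero d _ _ h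
  rw [zsc_latL hπ.ne_zero, zsc_latL hπ.ne_zero] at H1 H2
  rw [latL_le_latL hπ] at H1 H2
  intro i j
  have := H1 i
  have := H2 j
  have := H1 j
  have := H2 i
  beta_reduce at *
  omega

lemma chain_mono {π : O} (hπ : Irreducible π) {ι : Type*} [Fintype ι]
    (e : Module.Basis ι K (Fin n → K)) (w w' : ι → ℤ) (d : ℕ)
    (hle : ∀ i, w i ≤ w' i) (h0 : ∃ i, w' i = w i)
    (hdmax : ∀ i, w' i ≤ w i + d) (hdex : ∃ i, w' i = w i + d) :
    ChainTo O K n π (latL π e w) (latL π e w') d := by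
  refine ⟨fun t => latL π e (fun i => min (w' i) (w i + (t : ℤ))), ?_, ?_, ?_⟩
  · refine congrArg (latL π e) (funext fun i => ?_)
    have := hle i; push_cast; omega
  · refine congrArg (latL π e) (funext fun i => ?_)
    have := hdmax i; push_cast; omega
  · intro t ht
    constructor
    · rintro ⟨m, hm⟩
      rw [← zsc, zsc_latL hπ.ne_zero] at hm
      have heq := latL_inj hπ e hm
      obtain ⟨i0, hi0⟩ := h0
      obtain ⟨i1, hi1⟩ := hdex
      have e0 := congrFun heq i0
      have e1 := congrFun heq i1
      have c0 : (t : ℤ) ≥ 0 := Int.natCast_nonneg t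
      have c1 : (t : ℤ) + 1 ≤ (d : ℤ) := by exact_mod_cast ht
      have := hle i0; have := hle i1
      push_cast at e0 e1
      omega
    · refine ⟨_, _, homothetic_refl π _, homothetic_refl π _, ?_, ?_⟩
      · rw [zsc_one, zsc_latL hπ.ne_zero, latL_le_latL hπ]
        intro i
        push_cast; omega
      · rw [latL_le_latL hπ]
        intro i
        push_cast
        omega

/-! ### denominators and scaling into a lattice -/

lemma exists_denom {π : O} (hπ : Irreducible π) (c : K) :
    ∃ (k : ℕ) (o : O), (algebraMap O K π) ^ k * c = algebraMap O K o := by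
  obtain ⟨a, b, hb, rfl⟩ := IsFractionRing.div_surjective (A := O) c
  have hb0 : b ≠ 0 := nonZeroDivisors.ne_zero hb
  obtain ⟨k, u, hbe⟩ := IsDiscreteValuationRing.eq_unit_mul_pow_irreducible hb0 hπ
  refine ⟨k, (↑u⁻¹ : O) * a, ?_⟩
  have hKb0 : algebraMap O K b ≠ 0 := fun h => hb0 (algMap_inj (by rw [h, map_zero]))
  apply mul_right_cancel₀ hKb0
  have h1 : (↑u⁻¹ : O) * a * b = a * π ^ k := by
    rw [hbe]
    calc (↑u⁻¹ : O) * a * (↑u * π ^ k) = ((↑u⁻¹ : O) * ↑u) * (a * π ^ k) := by ring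
    _ = a * π ^ k := by rw [Units.inv_mul, one_mul]
  rw [← map_mul, h1, map_mul, map_pow, mul_assoc, div_mul_cancel₀ _ hKb0]
  ring

lemma exists_pow_smul_mem {π : O} (hπ : Irreducible π) {Λ : Submodule O (Fin n → K)}
    (hs : Submodule.span K (Λ : Set (Fin n → K)) = ⊤) (x : Fin n → K) :
    ∃ k : ℕ, (algebraMap O K π) ^ k • x ∈ Λ := by
  have hx : x ∈ Submodule.span K (Λ : Set (Fin n → K)) := by rw [hs]; trivial
  refine Submodule.span_induction ?_ ?_ ?_ ?_ hx
  · exact fun y hy => ⟨0, by simpa using hy⟩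
  · exact ⟨0, by simp⟩
  · rintro y z hy hz ⟨k1, h1⟩ ⟨k2, h2⟩
    refine ⟨k1 + k2, ?_⟩
    have heq : (algebraMap O K π) ^ (k1 + k2) • (y + z)
        = π ^ k2 • ((algebraMap O K π) ^ k1 • y) + π ^ k1 • ((algebraMap O K π) ^ k2 • z) := by
      rw [smul_add, ← algebraMap_smul K (π ^ k2), ← algebraMap_smul K (π ^ k1), map_pow,
        map_pow, smul_smul, smul_smul, ← pow_add, ← pow_add, add_comm k2 k1]
    rw [heq]
    exact Submodule.add_mem _ (Submodule.smul_mem _ _ h1) (Submodule.smul_mem _ _ h2)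
  · rintro c y hy ⟨k, hk⟩
    obtain ⟨k2, o, ho⟩ := exists_denom hπ c
    refine ⟨k + k2, ?_⟩
    have hco : (algebraMap O K π) ^ (k + k2) * c = (algebraMap O K o) * (algebraMap O K π) ^ k := by
      rw [pow_add, ← ho]; ring
    have heq : (algebraMap O K π) ^ (k + k2) • (c • y) = o • ((algebraMap O K π) ^ k • y) := by
      rw [← algebraMap_smul K o ((algebraMap O K π) ^ k • y), smul_smul, smul_smul, hco]
    rw [heq]
    exact Submodule.smul_mem _ _ hk

lemma exists_zsc_le {π : O} (hπ : Irreducible π) {Λ Λ' : Submodule O (Fin n → K)}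
    (hs : Submodule.span K (Λ : Set (Fin n → K)) = ⊤) (hfg : Λ'.FG) :
    ∃ k : ℕ, zsc π (k : ℤ) Λ' ≤ Λ := by
  obtain ⟨s, hsp⟩ := hfg
  have hch := fun g : {x // x ∈ s} => exists_pow_smul_mem hπ hs (g : Fin n → K)
  choose kf hkf using hch
  set k := s.attach.sup kf with hk
  refine ⟨k, ?_⟩
  rw [zsc, smulLat, Submodule.map_le_iff_le_comap, ← hsp, Submodule.span_le]
  intro g hg
  simp only [Set.mem_setOf_eq, SetLike.mem_coe, Submodule.mem_comap, LinearMap.smul_apply,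
    LinearMap.id_apply]
  have hle : kf ⟨g, hg⟩ ≤ k := Finset.le_sup (Finset.mem_attach s ⟨g, hg⟩)
  have heq : ((algebraMap O K π) ^ (k : ℤ)) • g
      = (π ^ (k - kf ⟨g, hg⟩)) • ((algebraMap O K π) ^ (kf ⟨g, hg⟩) • g) := by
    rw [← algebraMap_smul K (π ^ (k - kf ⟨g, hg⟩)), smul_smul, map_pow, ← pow_add,
      zpow_natCast]
    congr 2
    omega
  rw [heq]
  exact Submodule.smul_mem _ _ (hkf ⟨g, hg⟩)

/-! ### span helpers -/

lemma span_coe_basis {M : Type*} [AddCommGroup M] [Module O M] (P : Submodule O M)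
    {κ : Type*} (bP : Module.Basis κ O P) :
    P = Submodule.span O (Set.range fun i => (bP i : M)) := by
  conv_lhs => rw [← Submodule.map_subtype_top P]
  rw [← bP.span_eq, Submodule.map_span, ← Set.range_comp]
  rfl

lemma spanK_smulLat {c : K} (hc : c ≠ 0) {Λ : Submodule O (Fin n → K)}
    (hs : Submodule.span K (Λ : Set (Fin n → K)) = ⊤) :
    Submodule.span K ((smulLat O K n c Λ) : Set (Fin n → K)) = ⊤ := by
  have key : ∀ y ∈ Submodule.span K (Λ : Set (Fin n → K)),
      c • y ∈ Submodule.span K ((smulLat O K n c Λ) : Set (Fin n → K)) := by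
    intro y hy
    refine Submodule.span_induction ?_ ?_ ?_ ?_ hy
    · intro z hz; exact Submodule.subset_span (mem_smulLat.mpr ⟨z, hz, rfl⟩)
    · simp
    · intro a b _ _ ha hb; rw [smul_add]; exact Submodule.add_mem _ ha hb
    · intro k z _ hz; rw [smul_comm]; exact Submodule.smul_mem _ _ hz
  rw [eq_top_iff]; intro x _
  have hx := key (c⁻¹ • x) (by rw [hs]; trivial)
  rwa [smul_smul, mul_inv_cancel₀ hc, one_smul] at hx

lemma span_unit_smul {M : Type*} [AddCommGroup M] [Module O M] {κ : Type*} (u : κ → Oˣ)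
    (g : κ → M) :
    Submodule.span O (Set.range fun i => ((u i : O) • g i)) = Submodule.span O (Set.range g) := by
  apply le_antisymm <;> rw [Submodule.span_le] <;> rintro _ ⟨i, rfl⟩
  · exact Submodule.smul_mem _ _ (Submodule.subset_span ⟨i, rfl⟩)
  · have heq : g i = ((↑(u i)⁻¹ : O)) • ((u i : O) • g i) := by
      rw [smul_smul, Units.inv_mul, one_smul]
    rw [heq]
    exact Submodule.smul_mem _ _ (Submodule.subset_span ⟨i, rfl⟩)

lemma latL_reindex {π : O} {ι κ : Type*} (e : Module.Basis ι K (Fin n → K)) (τ : ι ≃ κ) (w : ι → ℤ) :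
    latL π (e.reindex τ) (w ∘ τ.symm) = latL π e w := by
  rw [latL, latL]
  congr 1
  have heq : (fun j => (algebraMap O K π) ^ ((w ∘ τ.symm) j) • (e.reindex τ) j)
      = (fun i => (algebraMap O K π) ^ (w i) • e i) ∘ τ.symm := by
    funext j; simp [Module.Basis.reindex_apply]
  rw [heq, Set.range_comp, Equiv.range_eq_univ, Set.image_univ]

/-! ### the main structure theorem: simultaneous adapted bases -/

lemma exists_pair_latL {π : O} (hπ : Irreducible π) [Nontrivial (Fin n → K)]
    {Λ Λ' : Submodule O (Fin n → K)}
    (hΛ : IsLatticeFull O K n Λ) (hΛ' : IsLatticeFull O K n Λ') :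
    ∃ (r : ℕ) (_ : 0 < r) (e : Module.Basis (Fin r) K (Fin n → K)) (a : Fin r → ℤ),
      Λ = latL π e (fun _ => 0) ∧ Λ' = latL π e a := by
  classical
  obtain ⟨k, hk⟩ := exists_zsc_le hπ hΛ.2 hΛ'.1
  haveI : Module.Finite O ↥Λ := Module.Finite.iff_fg.mpr hΛ.1
  haveI : Module.IsTorsionFree O K :=
    NoZeroSMulDivisors.iff_algebraMap_injective.mpr (algMap_inj (K := K))
  haveI : Module.Free O ↥Λ := Module.free_of_finite_type_torsion_free'
  set ι := Module.Free.ChooseBasisIndex O ↥Λ with hι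
  let b : Module.Basis ι O ↥Λ := Module.Free.chooseBasis O ↥Λ
  set N' := zsc π (k : ℤ) Λ' with hN'
  have hN'span : Submodule.span K (N' : Set (Fin n → K)) = ⊤ :=
    spanK_smulLat (zpow_ne_zero _ (piK_ne_zero hπ.ne_zero)) hΛ'.2
  set N : Submodule O ↥Λ := Submodule.comap Λ.subtype N' with hN
  obtain ⟨r, ⟨bM, bN, f, a, hsnf⟩⟩ := Submodule.smithNormalForm b N
  set eK : ι → (Fin n → K) := fun i => ((bM i : ↥Λ) : Fin n → K) with heK
  have hΛeq : Λ = Submodule.span O (Set.range eK) := span_coe_basis Λ bM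
  have hNmap : Submodule.map Λ.subtype N = N' := by
    rw [hN, Submodule.map_comap_subtype]
    exact inf_eq_right.mpr hk
  have hN'eq : N' = Submodule.span O (Set.range fun i => (a i : O) • eK (f i)) := by
    rw [← hNmap, span_coe_basis N bN, Submodule.map_span, ← Set.range_comp]
    have heq : (⇑Λ.subtype ∘ fun i => ((bN i : ↥N) : ↥Λ)) = fun i => (a i : O) • eK (f i) := by
      funext i
      show ((bN i : ↥Λ) : Fin n → K) = (a i : O) • eK (f i)
      rw [hsnf i, heK, Submodule.coe_smul]
    rw [heq]
  -- the K-basis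
  have hli0 : LinearIndependent O eK := by
    have := bM.linearIndependent.map' Λ.subtype (Submodule.ker_subtype Λ)
    exact this
  have hliK : LinearIndependent K eK :=
    hli0.localization K (nonZeroDivisors O)
  have hspK : Submodule.span K (Set.range eK) = ⊤ := by
    rw [eq_top_iff, ← hΛ.2, Submodule.span_le]
    intro x hx
    have hx2 : x ∈ Submodule.span O (Set.range eK) := by rw [← hΛeq]; exact hx
    exact Submodule.span_le_restrictScalars O K _ hx2
  let e0 : Module.Basis ι K (Fin n → K) := Module.Basis.mk hliK (by rw [hspK])
  have he0 : ∀ i, e0 i = eK i := fun i => Module.Basis.mk_apply _ _ i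
  -- a i ≠ 0 and factorization
  have ha : ∀ i, a i ≠ 0 := by
    intro i h
    apply bN.ne_zero i
    have := hsnf i
    rw [h, zero_smul] at this
    exact Subtype.coe_injective this
  have hfac := fun i => IsDiscreteValuationRing.eq_unit_mul_pow_irreducible (ha i) hπ
  choose v u hau using hfac
  -- N' as a latL over the image of f
  have hN'span2 : N' = Submodule.span O
      (Set.range fun i => ((algebraMap O K π) ^ (v i : ℤ)) • eK (f i)) := by
    rw [hN'eq]
    have heq2 : (fun i => (a i : O) • eK (f i))
        = fun i => ((u i : O) • (((algebraMap O K π) ^ (v i : ℤ)) • eK (f i))) := by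
      funext i
      rw [hau i,
        show ((u i : O) * π ^ (v i)) • eK (f i)
          = (u i : O) • (((π : O) ^ (v i)) • eK (f i)) from mul_smul _ _ _]
      congr 1
      rw [← algebraMap_smul K ((π : O) ^ (v i)) (eK (f i)), map_pow, zpow_natCast]
    rw [heq2, span_unit_smul]
  -- f is surjective
  have hW : Submodule.span K (Set.range (eK ∘ ⇑f)) = ⊤ := by
    rw [eq_top_iff, ← hN'span, Submodule.span_le]
    intro x hx
    have hx2 : x ∈ Submodule.span O
        (Set.range fun i => ((algebraMap O K π) ^ (v i : ℤ)) • eK (f i)) := by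
      rw [← hN'span2]; exact hx
    have step1 : x ∈ Submodule.span K
        (Set.range fun i => ((algebraMap O K π) ^ (v i : ℤ)) • eK (f i)) :=
      Submodule.span_le_restrictScalars O K _ hx2
    refine Submodule.span_le.mpr ?_ step1
    rintro _ ⟨i, rfl⟩
    exact Submodule.smul_mem _ _ (Submodule.subset_span ⟨i, rfl⟩)
  have hfs : Function.Surjective ⇑f := by
    intro j
    by_contra hj
    have hjr : j ∉ Set.range ⇑f := fun ⟨i, hi⟩ => hj ⟨i, hi⟩
    have hmem : eK j ∈ Submodule.span K (eK '' Set.range ⇑f) := by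
      rw [← Set.range_comp, hW]; trivial
    exact hliK.notMem_span_image hjr hmem
  let σ : Fin r ≃ ι := Equiv.ofBijective ⇑f ⟨f.injective, hfs⟩
  haveI : Nonempty ι := e0.index_nonempty
  have hrne : Nonempty (Fin r) := Nonempty.map ⇑σ.symm inferInstance
  have hrpos : 0 < r := Fin.pos_iff_nonempty.mpr hrne
  -- N' as a latL over ι
  have hcomp : (fun i : Fin r => ((algebraMap O K π) ^ (v i : ℤ)) • eK (f i))
      = (fun j : ι => ((algebraMap O K π) ^ (v (σ.symm j) : ℤ)) • e0 j) ∘ ⇑σ := by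
    funext i
    show (algebraMap O K π) ^ (v i : ℤ) • eK (f i)
      = (algebraMap O K π) ^ (v (σ.symm (σ i)) : ℤ) • e0 (σ i)
    rw [Equiv.symm_apply_apply, he0]
    rfl
  have hN'latL : N' = latL π e0 (fun j => (v (σ.symm j) : ℤ)) := by
    rw [hN'span2, hcomp, latL, Set.range_comp, Equiv.range_eq_univ, Set.image_univ]
  have hfun0 : (fun i : ι => (algebraMap O K π) ^ ((fun _ : ι => (0:ℤ)) i) • e0 i) = eK :=
    funext fun j => by rw [zpow_zero, one_smul, he0]
  have hΛlatL : Λ = latL π e0 (fun _ => 0) := by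
    rw [hΛeq, latL, hfun0]
  have hΛ'latL : Λ' = latL π e0 (fun j => (v (σ.symm j) : ℤ) + (-(k : ℤ))) := by
    have h1 : Λ' = zsc π (-(k : ℤ)) N' := by
      rw [hN', zsc_zsc hπ.ne_zero]
      have hz : (-(k:ℤ) + k) = 0 := by omega
      rw [hz, zsc_zero]
    rw [h1, hN'latL, zsc_latL hπ.ne_zero]
  refine ⟨r, hrpos, e0.reindex σ.symm,
    (fun j => (v (σ.symm j) : ℤ) + (-(k : ℤ))) ∘ (σ.symm).symm, ?_, ?_⟩
  · show Λ = latL π (e0.reindex σ.symm) ((fun _ : ι => (0:ℤ)) ∘ (σ.symm).symm)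
    rw [latL_reindex]
    exact hΛlatL
  · rw [latL_reindex]
    exact hΛ'latL

end Stmt13Aux

open Stmt13Aux

/-- Metrical convexity implies convexity: if `Γ` is a (finite, homothety-saturated) set of
classes of lattices in `K^n` such that for all `[Λ], [Λ'] ∈ Γ` every class `[Λ'']` with
`dist([Λ],[Λ'']) + dist([Λ''],[Λ']) = dist([Λ],[Λ'])` lies in `Γ`, then `Γ` is convex: for
any representatives `Λ, Λ'` of classes of `Γ`, the class of `Λ ∩ Λ'` belongs to `Γ`. -/
theorem stmt13 {O K : Type*} [CommRing O] [IsDomain O] [IsDiscreteValuationRing O]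
    [Field K] [Algebra O K] [IsFractionRing O K]
    (π : O) (hπ : Irreducible π) (n : ℕ)
    (Γ : Set (Submodule O (Fin n → K)))
    (hlat : ∀ Λ ∈ Γ, IsLatticeFull O K n Λ)
    (hsat : ∀ Λ ∈ Γ, ∀ M, Homothetic O K n π Λ M → M ∈ Γ)
    (hfin : ∃ S : Finset (Submodule O (Fin n → K)),
      ∀ M ∈ Γ, ∃ Λ ∈ S, Homothetic O K n π M Λ)
    (hmet : ∀ Λ ∈ Γ, ∀ Λ' ∈ Γ, ∀ Λ'' : Submodule O (Fin n → K),
      IsLatticeFull O K n Λ'' →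
      ∀ d d1 d2 : ℕ, IsDist O K n π Λ Λ'' d1 → IsDist O K n π Λ'' Λ' d2 →
        IsDist O K n π Λ Λ' d → d1 + d2 = d → Λ'' ∈ Γ) :
    ∀ Λ ∈ Γ, ∀ Λ' ∈ Γ, Λ ⊓ Λ' ∈ Γ := by
  intro Λ hΛ Λ' hΛ'
  rcases subsingleton_or_nontrivial (Fin n → K) with hss | hnt
  · have heq : Λ ⊓ Λ' = Λ := by
      ext x
      have hx0 : x = 0 := Subsingleton.elim x 0
      subst hx0
      simp
    rw [heq]; exact hΛ
  · obtain ⟨r, hr, e, a, hΛe, hΛ'e⟩ := exists_pair_latL hπ (hlat Λ hΛ) (hlat Λ' hΛ')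
    haveI : Nonempty (Fin r) := Fin.pos_iff_nonempty.mp hr
    obtain ⟨iA, -, hiA⟩ := Finset.exists_mem_eq_sup' (Finset.univ_nonempty) a
    obtain ⟨iB, -, hiB⟩ := Finset.exists_mem_eq_inf' (Finset.univ_nonempty) a
    set A := Finset.univ.sup' Finset.univ_nonempty a with hA
    set B := Finset.univ.inf' Finset.univ_nonempty a with hB
    have hAle : ∀ i, a i ≤ A := fun i => Finset.le_sup' a (Finset.mem_univ i)
    have hBle : ∀ i, B ≤ a i := fun i => Finset.inf'_le a (Finset.mem_univ i)
    by_cases hB0 : 0 ≤ B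
    · have hle : Λ' ≤ Λ := by
        rw [hΛe, hΛ'e, latL_le_latL hπ]
        intro i
        have := hBle i
        omega
      rw [inf_eq_right.mpr hle]; exact hΛ'
    · by_cases hA0 : A ≤ 0
      · have hle : Λ ≤ Λ' := by
          rw [hΛe, hΛ'e, latL_le_latL hπ]
          intro i
          have := hAle i
          omega
        rw [inf_eq_left.mpr hle]; exact hΛ
      · push_neg at hB0 hA0
        -- the midpoint lattice
        have hinf : Λ ⊓ Λ' = latL π e (fun i => max (a i) 0) := by
          rw [hΛe, hΛ'e, latL_inf hπ.ne_zero]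
          exact congrArg (latL π e) (funext fun i => max_comm 0 (a i))
        have hd1 : IsDist O K n π Λ (latL π e (fun i => max (a i) 0)) A.toNat := by
          rw [hΛe]
          constructor
          · refine chain_mono hπ e _ _ _ (fun i => le_max_right _ _) ⟨iB, by omega⟩
              (fun i => by have := hAle i; omega) ⟨iA, by omega⟩
          · intro d' hd' hchain
            have hlb := chain_lb hπ e _ _ d' hchain iA iB
            have h1 : max (a iA) 0 = A := by omega
            have h2 : max (a iB) 0 = 0 := by omega
            omega
        have hchain2 : ChainTo O K n π (latL π e (fun i => max (a i) 0)) Λ' (-B).toNat := by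
          rw [hΛ'e]
          refine chain_symm hπ.ne_zero (chain_mono hπ e a _ _ (fun i => le_max_left _ _)
            ⟨iA, by omega⟩ (fun i => by have := hBle i; omega) ⟨iB, by omega⟩)
        have hd2 : IsDist O K n π (latL π e (fun i => max (a i) 0)) Λ' (-B).toNat := by
          constructor
          · exact hchain2
          · intro d' hd' hchain
            rw [hΛ'e] at hchain
            have hlb := chain_lb hπ e _ _ d' hchain iA iB
            have h1 : max (a iA) 0 = A := by omega
            have h2 : max (a iB) 0 = 0 := by omega
            omega
        have hd3 : IsDist O K n π Λ Λ' (A.toNat + (-B).toNat) := by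
          constructor
          · exact chain_trans hd1.1 hchain2
          · intro d' hd' hchain
            rw [hΛe, hΛ'e] at hchain
            have hlb := chain_lb hπ e _ _ d' hchain iA iB
            omega
        have hfull : IsLatticeFull O K n (latL π e (fun i => max (a i) 0)) :=
          latL_full π hπ.ne_zero e _
        have hmem := hmet Λ hΛ Λ' hΛ' (latL π e (fun i => max (a i) 0)) hfull
          (A.toNat + (-B).toNat) A.toNat (-B).toNat hd1 hd2 hd3 rfl
        rw [hinf]
        exact hmem
end
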